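/- Every switchable path in the visibility graph of a balanced separated partition is non-crossing: no two of its straight-line edges share a point other than a common endpoint. -/

import Mathlib

/-- Points in the plane. -/
abbrev Pt := ℝ × ℝ

/-- No three distinct points of `S` are collinear. -/
def GenPos (S : Set Pt) : Prop :=
  ∀ a ∈ S, ∀ b ∈ S, ∀ c ∈ S, a ≠ b → a ≠ c → b ≠ c →
    ¬ Collinear ℝ ({a, b, c} : Set Pt)

/-- A point `p` outside the hull sees `q ∈ S` if the segment `pq` meets
the convex hull of `S` exactly in `{q}`. -/
def Sees (p q : Pt) (S : Set Pt) : Prop :=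
  segment ℝ p q ∩ convexHull ℝ S = {q}

/-- The set of points of `S` seen from `p`. -/
def SeenSet (p : Pt) (S : Set Pt) : Set Pt := {q ∈ S | Sees p q S}

/-- `x` is an extreme point of `S`. -/
def ExtremePt (S : Set Pt) (x : Pt) : Prop := x ∈ S ∧ x ∉ convexHull ℝ (S \ {x})

/-- `ab` is an edge of the boundary of the convex hull of `S`. -/
def HullEdge (S : Set Pt) (a b : Pt) : Prop :=
  a ∈ S ∧ b ∈ S ∧ a ≠ b ∧ segment ℝ a b ⊆ frontier (convexHull ℝ S)

/-- A list enumerating the extreme points of `S` in cyclic convex-position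
order along the boundary of the convex hull. -/
def HullCycle (S : Set Pt) (l : List Pt) : Prop :=
  l.Nodup ∧ {x | x ∈ l} = {x | ExtremePt S x} ∧
    ∀ i < l.length, HullEdge S l[i]! l[(i + 1) % l.length]!

/-- A contiguous arc along the boundary of the hull of `S`
beginning in `a` and ending in `c`. -/
def Arc (S : Set Pt) (a c : Pt) (A : List Pt) : Prop :=
  ∃ l, HullCycle S l ∧ ∃ k ≤ l.length,
    A = l.take k ∧ A.head? = some a ∧ A.getLast? = some c

/-- The (undirected) edges of the path given by the list `l`. -/
def edgeSet (l : List Pt) : Set (Set Pt) :=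
  {e | ∃ p ∈ l.zip l.tail, e = ({p.1, p.2} : Set Pt)}

/-- The straight-line drawing of the path `l` is crossing-free: two edges meet
only in common endpoints. -/
def PlaneList (l : List Pt) : Prop :=
  ∀ i j : ℕ, i < j → j + 1 < l.length →
    segment ℝ l[i]! l[i + 1]! ∩ segment ℝ l[j]! l[j + 1]! ⊆
      ({l[i]!, l[i + 1]!} ∩ {l[j]!, l[j + 1]!} : Set Pt)

/-- `l` visits every point of `S` exactly once. -/
def IsSpanningPath (S : Set Pt) (l : List Pt) : Prop :=
  l.Nodup ∧ {x | x ∈ l} = S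

/-- A crossing-free straight-line spanning path of `S`. -/
def PlaneSpanningPath (S : Set Pt) (l : List Pt) : Prop :=
  IsSpanningPath S l ∧ PlaneList l

/-- Two paths are edge-disjoint if no segment is an edge of both. -/
def EdgeDisjoint (P Q : List Pt) : Prop := ∀ e ∈ edgeSet P, e ∉ edgeSet Q

/-- `S` admits three pairwise edge-disjoint plane spanning paths. -/
def ThreePaths (S : Set Pt) : Prop :=
  ∃ P Q R : List Pt,
    PlaneSpanningPath S P ∧ PlaneSpanningPath S Q ∧ PlaneSpanningPath S R ∧
    EdgeDisjoint P Q ∧ EdgeDisjoint P R ∧ EdgeDisjoint Q R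

/-- `(S₁, S₂)` is a balanced separated partition of `S`. -/
def BSP (S S₁ S₂ : Finset Pt) : Prop :=
  S₁ ∪ S₂ = S ∧ Disjoint S₁ S₂ ∧
  (S₁.card : ℤ) - S₂.card ≤ 1 ∧ (S₂.card : ℤ) - S₁.card ≤ 1 ∧
  Disjoint (convexHull ℝ (S₁ : Set Pt)) (convexHull ℝ (S₂ : Set Pt))

/-- `ab` is an edge of the visibility graph `V(S₁,S₂)`. -/
def VisEdge (S₁ S₂ : Finset Pt) (a b : Pt) : Prop :=
  a ∈ S₁ ∧ b ∈ S₂ ∧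
  segment ℝ a b ∩ (convexHull ℝ (S₁ : Set Pt) ∪ convexHull ℝ (S₂ : Set Pt))
    = ({a, b} : Set Pt)

/-- Two segments cross: their open segments share a point. -/
def SegCross (a b c d : Pt) : Prop :=
  (openSegment ℝ a b ∩ openSegment ℝ c d).Nonempty

/-- Consecutive vertices of `l` alternate between `S₁` and `S₂`. -/
def Alternating (S₁ S₂ : Finset Pt) (l : List Pt) : Prop :=
  ∀ i, i + 1 < l.length →
    (l[i]! ∈ S₁ ∧ l[i + 1]! ∈ S₂) ∨ (l[i]! ∈ S₂ ∧ l[i + 1]! ∈ S₁)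

/-- A zig-zag path for the balanced separated partition `(S₁,S₂)` of `S`. -/
def ZigZag (S S₁ S₂ : Finset Pt) (l : List Pt) : Prop :=
  PlaneSpanningPath (S : Set Pt) l ∧ Alternating S₁ S₂ l

/-- Twice the signed area of the triangle `a b c`; positive iff `c` lies to the
left of the directed line `ab`. -/
def ccw (a b c : Pt) : ℝ :=
  (b.1 - a.1) * (c.2 - a.2) - (b.2 - a.2) * (c.1 - a.1)

/-- `uv` is a halving segment of `S`: the line through `u` and `v` has exactly
`(|S| - 2)/2` points of `S` strictly on each side. -/
def Halving (S : Finset Pt) (u v : Pt) : Prop :=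
  u ∈ S ∧ v ∈ S ∧ u ≠ v ∧
  2 * ((S : Set Pt) ∩ {s | 0 < ccw u v s}).ncard = S.card - 2 ∧
  2 * ((S : Set Pt) ∩ {s | ccw u v s < 0}).ncard = S.card - 2

/-- The wheel configuration: all points but one in convex position, and one
interior point `y` such that every line through `y` and another point of the
configuration halves the remaining points. -/
def IsWheel (S : Finset Pt) : Prop :=
  ∃ y ∈ S,
    (∀ x ∈ S.erase y, x ∉ convexHull ℝ (((S.erase y : Finset Pt) : Set Pt) \ {x})) ∧
    y ∈ interior (convexHull ℝ ((S.erase y : Finset Pt) : Set Pt)) ∧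
    ∀ x ∈ S.erase y, Halving S y x

/-- `v` is a switchable path for the balanced separated partition `(S₁,S₂)` of
`S`: its edges are visibility edges, they cross a separating line of the
partition in order along the line, and every open triangle spanned by three
consecutive vertices contains no point of `S`. -/
def Switchable (S S₁ S₂ : Finset Pt) (v : List Pt) : Prop :=
  2 ≤ v.length ∧
  (∀ i, i + 1 < v.length →
    VisEdge S₁ S₂ v[i]! v[i + 1]! ∨ VisEdge S₁ S₂ v[i + 1]! v[i]!) ∧
  (∃ (f : Pt →ₗ[ℝ] ℝ) (c : ℝ),
    (∀ x ∈ S₁, f x < c) ∧ (∀ x ∈ S₂, c < f x) ∧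
    ∃ x : ℕ → Pt,
      (∀ i, i + 1 < v.length → x i ∈ segment ℝ v[i]! v[i + 1]! ∧ f (x i) = c) ∧
      ∃ g : Pt →ₗ[ℝ] ℝ, ∀ i j, i < j → j + 1 < v.length → g (x i) < g (x j)) ∧
  ∀ i, i + 2 < v.length →
    ∀ s ∈ S, s ∉ interior (convexHull ℝ ({v[i]!, v[i + 1]!, v[i + 2]!} : Set Pt))

/-- `u` is a bridged vertex of the partition `(S₁,S₂)` of `S`: an endpoint of an
edge of the boundary of `conv S` with one endpoint in each class. -/
def Bridged (S S₁ S₂ : Finset Pt) (u : Pt) : Prop :=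
  ∃ w, HullEdge (S : Set Pt) u w ∧
    ((u ∈ S₁ ∧ w ∈ S₂) ∨ (u ∈ S₂ ∧ w ∈ S₁))

/-- `u` is incident with at least two edges of the visibility graph. -/
def IncidentVisEdges2 (S₁ S₂ : Finset Pt) (u : Pt) : Prop :=
  ∃ w₁ w₂, w₁ ≠ w₂ ∧
    (VisEdge S₁ S₂ u w₁ ∨ VisEdge S₁ S₂ w₁ u) ∧
    (VisEdge S₁ S₂ u w₂ ∨ VisEdge S₁ S₂ w₂ u)

/-!
Induct on the distance `j - i` of two edges. Consecutive edges share a vertex and meet only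
there, because a visibility edge contains no further point of the hulls. Suppose edges `i < j`
met at a point `p` other than a common endpoint, say on the side of `S₁`; `p` cannot lie on the
separating line, where the crossing points are distinct. The edge `k = i + 1` crosses the line
between the crossing points `xᵢ` and `xⱼ`, so it enters the triangle `xᵢ xⱼ p`. Its endpoint in
`S₁` lies outside this triangle: otherwise the segment joining it to the `S₁`-endpoint of edge
`i`, which lies in `conv S₁` and outside the triangle, would leave the triangle through edge `i`
or edge `j` at a point of `conv S₁`, that is, at an endpoint of that edge, and these lie outside
the triangle. So edge `k` leaves the triangle through edge `i` or edge `j`, against the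
induction hypothesis.
-/
open Set

section Segment

variable {E : Type*} [AddCommGroup E] [Module ℝ E]

theorem segment_eq_of_pair_eq {a b a' b' : E} (h : ({a, b} : Set E) = {a', b'}) :
    segment ℝ a b = segment ℝ a' b' := by
  rcases Set.pair_eq_pair_iff.1 h with ⟨rfl, rfl⟩ | ⟨rfl, rfl⟩
  · rfl
  · exact segment_symm ℝ _ _

theorem LinearMap.lt_apply_of_mem_segment (f : E →ₗ[ℝ] ℝ) {w u p : E}
    (hp : p ∈ segment ℝ w u) (hpw : p ≠ w) (hwu : f w < f u) : f w < f p := by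
  obtain ⟨t, ⟨ht₀, -⟩, rfl⟩ := (segment_eq_image' ℝ w u).subst (motive := (p ∈ ·)) hp
  have ht : 0 < t := ht₀.lt_of_ne <| by rintro rfl; simp at hpw
  simpa [map_add, map_smul] using mul_pos ht (sub_pos.2 hwu)

theorem LinearMap.injOn_segment (f : E →ₗ[ℝ] ℝ) {w u : E} (hwu : f w ≠ f u) :
    InjOn f (segment ℝ w u) := by
  intro z hz z' hz' h
  rw [segment_eq_image'] at hz hz'
  obtain ⟨t, -, rfl⟩ := hz
  obtain ⟨t', -, rfl⟩ := hz'
  simp only [map_add, map_smul, smul_eq_mul, map_sub, add_right_inj] at h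
  rw [mul_right_cancel₀ (sub_ne_zero.2 hwu.symm) h]

theorem mem_segment_or_mem_segment_of_mem_inter {a b c p : E}
    (hp : p ∈ segment ℝ b a ∩ segment ℝ b c) (hpb : p ≠ b) :
    a ∈ segment ℝ b c ∨ c ∈ segment ℝ b a := by
  rw [segment_eq_image', segment_eq_image'] at hp ⊢
  obtain ⟨⟨s, ⟨hs₀, -⟩, rfl⟩, ⟨t, ⟨ht₀, -⟩, hts⟩⟩ := hp
  replace hts : t • (c - b) = s • (a - b) := add_left_cancel hts
  have hs : s ≠ 0 := by rintro rfl; simp at hpb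
  have ht : t ≠ 0 := by rintro rfl; rw [zero_smul] at hts; simp [← hts] at hpb
  rcases le_total t s with hle | hle
  · refine Or.inl ⟨t / s, ⟨by positivity, div_le_one_of_le₀ hle hs₀⟩, ?_⟩
    simp only [div_eq_inv_mul, mul_smul, hts, inv_smul_smul₀ hs, add_sub_cancel]
  · refine Or.inr ⟨s / t, ⟨by positivity, div_le_one_of_le₀ hle ht₀⟩, ?_⟩
    simp only [div_eq_inv_mul, mul_smul, ← hts, inv_smul_smul₀ ht, add_sub_cancel]

theorem segment_inter_segment_subset_singleton {K : Set E} {a b c : E} (ha : a ∈ K)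
    (hc : c ∈ K) (hab : a ≠ b) (hcb : c ≠ b) (hac : a ≠ c)
    (hba : segment ℝ b a ∩ K ⊆ {b, a}) (hbc : segment ℝ b c ∩ K ⊆ {b, c}) :
    segment ℝ b a ∩ segment ℝ b c ⊆ {b} := by
  intro p hp
  by_contra hpb
  rcases mem_segment_or_mem_segment_of_mem_inter hp hpb with h | h
  · rcases hbc ⟨h, ha⟩ with h | h <;> contradiction
  · rcases hba ⟨h, hc⟩ with h | h <;> [exact hcb h; exact hac h.symm]

theorem exists_mem_segment_eq_zero [TopologicalSpace E] [IsTopologicalAddGroup E]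
    [ContinuousSMul ℝ E] {φ : E → ℝ} (hφ : Continuous φ) {a b : E} (ha : 0 ≤ φ a)
    (hb : φ b ≤ 0) : ∃ q ∈ segment ℝ a b, φ q = 0 :=
  (convex_segment a b).isPreconnected.intermediate_value (right_mem_segment ℝ a b)
    (left_mem_segment ℝ a b) hφ.continuousOn ⟨hb, ha⟩

end Segment

section Triangle

variable {f : Pt →ₗ[ℝ] ℝ} {c : ℝ} {a b p z : Pt}

/-- Cramer's rule in the plane. -/
theorem ccw_smul_eq (a b p z : Pt) :
    ccw a b p • z = ccw z b p • a + ccw a z p • b + ccw a b z • p := by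
  ext <;> simp [ccw] <;> ring

theorem ccw_add_ccw_add_ccw (a b p z : Pt) :
    ccw z b p + ccw a z p + ccw a b z = ccw a b p := by
  simp only [ccw]; ring

theorem ccw_mul_sub_eq (hfa : f a = c) (hfb : f b = c) (z : Pt) :
    ccw a b p * (f z - c) = ccw a b z * (f p - c) := by
  have h := congrArg f (ccw_smul_eq a b p z)
  simp only [map_add, map_smul, smul_eq_mul, hfa, hfb] at h
  linear_combination h + c * ccw_add_ccw_add_ccw a b p z

theorem ccw_ne_zero (hfa : f a = c) (hfb : f b = c) (hfp : f p ≠ c) (hab : a ≠ b) :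
    ccw a b p ≠ 0 := by
  set z : Pt := (a.1 - (b.2 - a.2), a.2 + (b.1 - a.1))
  have hz : ccw a b z ≠ 0 := by
    have hz : ccw a b z = (b.1 - a.1) ^ 2 + (b.2 - a.2) ^ 2 := by simp only [ccw, z]; ring
    rw [hz]
    intro h
    exact hab (Prod.ext (by nlinarith [sq_nonneg (b.1 - a.1), sq_nonneg (b.2 - a.2)])
      (by nlinarith [sq_nonneg (b.1 - a.1), sq_nonneg (b.2 - a.2)]))
  intro hD
  have h := ccw_mul_sub_eq (p := p) hfa hfb z
  rw [hD, zero_mul, eq_comm] at h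
  exact mul_ne_zero hz (sub_ne_zero.2 hfp) h

theorem ccw_eq_zero_of_mem_segment {w u : Pt} (ha : a ∈ segment ℝ w u)
    (hb : b ∈ segment ℝ w u) (hp : p ∈ segment ℝ w u) : ccw a b p = 0 := by
  rw [segment_eq_image'] at ha hb hp
  obtain ⟨r, -, rfl⟩ := ha
  obtain ⟨s, -, rfl⟩ := hb
  obtain ⟨t, -, rfl⟩ := hp
  simp only [ccw, Prod.fst_add, Prod.snd_add, Prod.smul_fst, Prod.smul_snd, Prod.fst_sub,
    Prod.snd_sub, smul_eq_mul]
  ring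

/-- The barycentric coordinate of `z` at the vertex `a` of the triangle `abp`. -/
noncomputable def baryCoord (a b p z : Pt) : ℝ := ccw z b p / ccw a b p

theorem continuous_baryCoord (a b p : Pt) : Continuous (baryCoord a b p) := by
  unfold baryCoord ccw
  fun_prop

theorem baryCoord_swap (a b p z : Pt) : baryCoord b a p z = ccw a z p / ccw a b p := by
  simp only [baryCoord, ccw]
  rw [← neg_div_neg_eq]
  congr 1 <;> ring

theorem baryCoord_cycle (a b p z : Pt) : baryCoord p a b z = ccw a b z / ccw a b p := by
  simp only [baryCoord, ccw]
  congr 1 <;> ring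

theorem baryCoord_smul_add (hD : ccw a b p ≠ 0) (z : Pt) :
    baryCoord a b p z • a + baryCoord b a p z • b + baryCoord p a b z • p = z := by
  rw [baryCoord_swap a b p z, baryCoord_cycle a b p z, baryCoord]
  simp only [div_eq_inv_mul, mul_smul, ← smul_add, ← ccw_smul_eq, inv_smul_smul₀ hD]

theorem baryCoord_add_add (hD : ccw a b p ≠ 0) (z : Pt) :
    baryCoord a b p z + baryCoord b a p z + baryCoord p a b z = 1 := by
  rw [baryCoord_swap a b p z, baryCoord_cycle a b p z, baryCoord, ← add_div, ← add_div,
    ccw_add_ccw_add_ccw, div_self hD]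

theorem baryCoord_apex_eq (hfa : f a = c) (hfb : f b = c) (hfp : f p ≠ c) (hab : a ≠ b)
    (z : Pt) : baryCoord p a b z = (f z - c) / (f p - c) := by
  rw [baryCoord_cycle, div_eq_div_iff (ccw_ne_zero hfa hfb hfp hab) (sub_ne_zero.2 hfp)]
  linear_combination (ccw_mul_sub_eq (p := p) hfa hfb z).symm

/-- Nonnegative exactly on the angle with apex `p` spanned by `a` and `b`. -/
noncomputable def wedgeCoord (a b p z : Pt) : ℝ := min (baryCoord a b p z) (baryCoord b a p z)

theorem continuous_wedgeCoord (a b p : Pt) : Continuous (wedgeCoord a b p) :=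
  (continuous_baryCoord a b p).min (continuous_baryCoord b a p)

theorem mem_segment_of_wedgeCoord_eq_zero (hfa : f a = c) (hfb : f b = c) (hfp : f p < c)
    (hab : a ≠ b) (hz : f z ≤ c) (h : wedgeCoord a b p z = 0) :
    z ∈ segment ℝ a p ∨ z ∈ segment ℝ b p := by
  have hD := ccw_ne_zero hfa hfb hfp.ne hab
  have hγ : 0 ≤ baryCoord p a b z := by
    rw [baryCoord_apex_eq hfa hfb hfp.ne hab]
    exact div_nonneg_of_nonpos (by linarith) (by linarith)
  have hsum := baryCoord_add_add hD z
  have hdecomp := baryCoord_smul_add hD z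
  obtain ⟨hα, hβ⟩ := le_min_iff.1 h.ge
  rcases min_choice (baryCoord a b p z) (baryCoord b a p z) with h' | h' <;>
    rw [wedgeCoord, h'] at h <;> rw [h, zero_smul] at hdecomp
  · exact Or.inr ⟨_, _, hβ, hγ, by linarith, by rwa [zero_add] at hdecomp⟩
  · exact Or.inl ⟨_, _, hα, hγ, by linarith, by rwa [add_zero] at hdecomp⟩

/-- A segment below the line `ab` that starts inside the triangle `abp` and ends outside it
leaves through the side `ap` or the side `bp`. -/
theorem exists_mem_segment_wedgeCoord_eq_zero (hfa : f a = c) (hfb : f b = c) (hfp : f p < c)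
    (hab : a ≠ b) {s t : Pt} (hst : ∀ z ∈ segment ℝ s t, f z ≤ c)
    (hs : 0 ≤ wedgeCoord a b p s) (ht : wedgeCoord a b p t ≤ 0) :
    ∃ q ∈ segment ℝ s t, wedgeCoord a b p q = 0 ∧ (q ∈ segment ℝ a p ∨ q ∈ segment ℝ b p) := by
  obtain ⟨q, hq, hq0⟩ := exists_mem_segment_eq_zero (continuous_wedgeCoord a b p) hs ht
  exact ⟨q, hq, hq0, mem_segment_of_wedgeCoord_eq_zero hfa hfb hfp hab (hst q hq) hq0⟩

theorem baryCoord_neg_of_ccw_eq_zero (hfa : f a = c) (hfb : f b = c) (hfp : f p < c)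
    (hab : a ≠ b) {w : Pt} (hw : ccw a w p = 0) (hwp : f w < f p) : baryCoord a b p w < 0 := by
  have hβ : baryCoord b a p w = 0 := by rw [baryCoord_swap, hw, zero_div]
  have hγ : 1 < baryCoord p a b w := by
    rw [baryCoord_apex_eq hfa hfb hfp.ne hab]
    exact (one_lt_div_of_neg (by linarith)).2 (by linarith)
  linarith [baryCoord_add_add (ccw_ne_zero hfa hfb hfp.ne hab) w]

theorem baryCoord_pos_of_lt_of_lt (hfa : f a = c) (hfb : f b = c) (hfp : f p ≠ c) (hab : a ≠ b)
    {g : Pt →ₗ[ℝ] ℝ} (hz : f z = c) (hgaz : g a < g z) (hgzb : g z < g b) :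
    0 < baryCoord a b p z := by
  have hD := ccw_ne_zero hfa hfb hfp hab
  have hγ : baryCoord p a b z = 0 := by
    rw [baryCoord_apex_eq hfa hfb hfp hab, hz, sub_self, zero_div]
  have hsum := baryCoord_add_add hD z
  have hg := congrArg g (baryCoord_smul_add hD z)
  simp only [map_add, map_smul, smul_eq_mul, hγ, zero_mul, add_zero] at hg hsum
  have h : baryCoord a b p z * (g a - g b) = g z - g b := by linear_combination hg - g b * hsum
  exact pos_of_mul_neg_left (h ▸ sub_neg.2 hgzb) (sub_nonpos.2 (hgaz.trans hgzb).le)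

end Triangle

/-- The edges `w k u k` (`k < n`) of a switchable path, oriented from `A` to `B`, forgetting that
consecutive edges share a vertex. -/
structure CrossingEdges (A B : Set Pt) (f g : Pt →ₗ[ℝ] ℝ) (c : ℝ) (n : ℕ) (w u x : ℕ → Pt) :
    Prop where
  convex_left : Convex ℝ A
  convex_right : Convex ℝ B
  lt_of_mem_left : ∀ z ∈ A, f z < c
  gt_of_mem_right : ∀ z ∈ B, c < f z
  left_mem : ∀ k < n, w k ∈ A
  right_mem : ∀ k < n, u k ∈ B
  segment_inter_subset : ∀ k < n, segment ℝ (w k) (u k) ∩ (A ∪ B) ⊆ {w k, u k}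
  crossing_mem : ∀ k < n, x k ∈ segment ℝ (w k) (u k)
  apply_crossing : ∀ k < n, f (x k) = c
  crossing_lt : ∀ i j, i < j → j < n → g (x i) < g (x j)

namespace CrossingEdges

variable {A B : Set Pt} {f g : Pt →ₗ[ℝ] ℝ} {c : ℝ} {n : ℕ} {w u x : ℕ → Pt} {i j k : ℕ}
  {p z : Pt}

theorem symm (h : CrossingEdges A B f g c n w u x) :
    CrossingEdges B A (-f) g (-c) n u w x where
  convex_left := h.convex_right
  convex_right := h.convex_left
  lt_of_mem_left z hz := neg_lt_neg (h.gt_of_mem_right z hz)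
  gt_of_mem_right z hz := neg_lt_neg (h.lt_of_mem_left z hz)
  left_mem := h.right_mem
  right_mem := h.left_mem
  segment_inter_subset k hk := by
    rw [segment_symm, union_comm, pair_comm]
    exact h.segment_inter_subset k hk
  crossing_mem k hk := segment_symm ℝ (w k) (u k) ▸ h.crossing_mem k hk
  apply_crossing k hk := by simp [h.apply_crossing k hk]
  crossing_lt := h.crossing_lt

theorem ne_of_mem_left_of_mem_right (h : CrossingEdges A B f g c n w u x) {z z' : Pt}
    (hz : z ∈ A) (hz' : z' ∈ B) : z ≠ z' := by
  rintro rfl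
  exact (h.lt_of_mem_left z hz).not_gt (h.gt_of_mem_right z hz')

theorem eq_left_of_mem (h : CrossingEdges A B f g c n w u x) (hk : k < n)
    (hz : z ∈ segment ℝ (w k) (u k)) (hzA : z ∈ A) : z = w k :=
  (h.segment_inter_subset k hk ⟨hz, Or.inl hzA⟩).resolve_right
    (h.ne_of_mem_left_of_mem_right hzA (h.right_mem k hk))

theorem mem_pair_of_mem_pair (h : CrossingEdges A B f g c n w u x) (hi : i < n) (hj : j < n)
    (hpi : p ∈ ({w i, u i} : Set Pt)) (hpj : p ∈ segment ℝ (w j) (u j)) :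
    p ∈ ({w j, u j} : Set Pt) := by
  refine h.segment_inter_subset j hj ⟨hpj, ?_⟩
  rcases hpi with rfl | rfl
  exacts [Or.inl (h.left_mem i hi), Or.inr (h.right_mem i hi)]

theorem eq_crossing (h : CrossingEdges A B f g c n w u x) (hk : k < n)
    (hz : z ∈ segment ℝ (w k) (u k)) (hfz : f z = c) : z = x k :=
  f.injOn_segment ((h.lt_of_mem_left _ (h.left_mem k hk)).trans
      (h.gt_of_mem_right _ (h.right_mem k hk))).ne
    hz (h.crossing_mem k hk) (hfz.trans (h.apply_crossing k hk).symm)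

theorem segment_ne (h : CrossingEdges A B f g c n w u x) (hij : i < j) (hj : j < n) :
    segment ℝ (w i) (u i) ≠ segment ℝ (w j) (u j) := by
  intro he
  have hx := h.eq_crossing (hij.trans hj) (he ▸ h.crossing_mem j hj) (h.apply_crossing j hj)
  exact (h.crossing_lt i j hij hj).ne' (congrArg g hx)

theorem segment_inter_subset_of_left_eq (h : CrossingEdges A B f g c n w u x) (hij : i < j)
    (hj : j < n) (hw : w i = w j) :
    segment ℝ (w i) (u i) ∩ segment ℝ (w j) (u j) ⊆ {w i} := by
  have hi := hij.trans hj
  have hj' := h.segment_inter_subset j hj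
  rw [← hw] at hj' ⊢
  exact segment_inter_segment_subset_singleton (Or.inr (h.right_mem i hi))
    (Or.inr (h.right_mem j hj))
    (h.ne_of_mem_left_of_mem_right (h.left_mem i hi) (h.right_mem i hi)).symm
    (hw ▸ h.ne_of_mem_left_of_mem_right (h.left_mem j hj) (h.right_mem j hj)).symm
    (fun hu => h.segment_ne hij hj (by rw [hw, hu])) (h.segment_inter_subset i hi) hj'

theorem segment_inter_subset_of_mem_pair (h : CrossingEdges A B f g c n w u x) (hij : i < j)
    (hj : j < n) (hpi : p ∈ ({w i, u i} : Set Pt)) (hpj : p ∈ ({w j, u j} : Set Pt)) :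
    segment ℝ (w i) (u i) ∩ segment ℝ (w j) (u j) ⊆ {p} := by
  have hi := hij.trans hj
  rcases hpi with rfl | rfl <;> rcases hpj with hp | hp
  · exact h.segment_inter_subset_of_left_eq hij hj hp
  · exact absurd hp (h.ne_of_mem_left_of_mem_right (h.left_mem i hi) (h.right_mem j hj))
  · exact absurd hp.symm (h.ne_of_mem_left_of_mem_right (h.left_mem j hj) (h.right_mem i hi))
  · simpa only [segment_symm ℝ (u _)] using h.symm.segment_inter_subset_of_left_eq hij hj hp

theorem baryCoord_left_neg (h : CrossingEdges A B f g c n w u x) (hi : i < n) (hj : j < n)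
    (hx : x i ≠ x j) (hpi : p ∈ segment ℝ (w i) (u i)) (hfp : f p < c) (hpwi : p ≠ w i) :
    baryCoord (x i) (x j) p (w i) < 0 :=
  baryCoord_neg_of_ccw_eq_zero (h.apply_crossing i hi) (h.apply_crossing j hj) hfp hx
    (ccw_eq_zero_of_mem_segment (h.crossing_mem i hi) (left_mem_segment ℝ _ _) hpi)
    (f.lt_apply_of_mem_segment hpi hpwi
      ((h.lt_of_mem_left _ (h.left_mem i hi)).trans (h.gt_of_mem_right _ (h.right_mem i hi))))

theorem wedgeCoord_left_neg (h : CrossingEdges A B f g c n w u x) (hi : i < n) (hj : j < n)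
    (hk : k < n) (hx : x i ≠ x j) (hpi : p ∈ segment ℝ (w i) (u i))
    (hpj : p ∈ segment ℝ (w j) (u j)) (hfp : f p < c) (hpwi : p ≠ w i) (hpwj : p ≠ w j) :
    wedgeCoord (x i) (x j) p (w k) < 0 := by
  have hmwi : wedgeCoord (x i) (x j) p (w i) < 0 :=
    min_lt_of_left_lt (h.baryCoord_left_neg hi hj hx hpi hfp hpwi)
  have hmwj : wedgeCoord (x i) (x j) p (w j) < 0 :=
    min_lt_of_right_lt (h.baryCoord_left_neg hj hi hx.symm hpj hfp hpwj)
  by_contra! hm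
  have hA := h.convex_left.segment_subset (h.left_mem k hk) (h.left_mem i hi)
  obtain ⟨q, hq, hq0, hside | hside⟩ := exists_mem_segment_wedgeCoord_eq_zero
    (h.apply_crossing i hi) (h.apply_crossing j hj) hfp hx
    (fun z hz => (h.lt_of_mem_left z (hA hz)).le) hm hmwi.le
  · rw [h.eq_left_of_mem hi ((convex_segment _ _).segment_subset (h.crossing_mem i hi) hpi hside)
      (hA hq)] at hq0
    exact hmwi.ne hq0
  · rw [h.eq_left_of_mem hj ((convex_segment _ _).segment_subset (h.crossing_mem j hj) hpj hside)
      (hA hq)] at hq0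
    exact hmwj.ne hq0

theorem false_of_mem_inter_of_apply_lt (h : CrossingEdges A B f g c n w u x) (hik : i < k)
    (hkj : k < j) (hj : j < n)
    (hik' : segment ℝ (w i) (u i) ∩ segment ℝ (w k) (u k) ⊆ {w k, u k})
    (hkj' : segment ℝ (w k) (u k) ∩ segment ℝ (w j) (u j) ⊆ {w k, u k})
    (hpi : p ∈ segment ℝ (w i) (u i)) (hpj : p ∈ segment ℝ (w j) (u j)) (hfp : f p < c)
    (hpwi : p ≠ w i) (hpwj : p ≠ w j) : False := by
  have hk := hkj.trans hj
  have hi := hik.trans hk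
  have hxi := h.apply_crossing i hi
  have hxj := h.apply_crossing j hj
  have hx : x i ≠ x j := fun he => (h.crossing_lt i j (hik.trans hkj) hj).ne (congrArg g he)
  have hmwk := h.wedgeCoord_left_neg hi hj hk hx hpi hpj hfp hpwi hpwj
  have hmxk : 0 ≤ wedgeCoord (x i) (x j) p (x k) := le_min
    (baryCoord_pos_of_lt_of_lt hxi hxj hfp.ne hx (h.apply_crossing k hk)
      (h.crossing_lt i k hik hk) (h.crossing_lt k j hkj hj)).le
    (baryCoord_pos_of_lt_of_lt (g := -g) hxj hxi hfp.ne hx.symm (h.apply_crossing k hk)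
      (neg_lt_neg (h.crossing_lt k j hkj hj)) (neg_lt_neg (h.crossing_lt i k hik hk))).le
  have hbelow : ∀ z ∈ segment ℝ (x k) (w k), f z ≤ c :=
    fun _ hz => (convex_halfSpace_le f.isLinear c).segment_subset (h.apply_crossing k hk).le
      (h.lt_of_mem_left _ (h.left_mem k hk)).le hz
  obtain ⟨q, hq, hq0, hside⟩ :=
    exists_mem_segment_wedgeCoord_eq_zero hxi hxj hfp hx hbelow hmxk hmwk.le
  have hqk : q ∈ segment ℝ (w k) (u k) :=
    (convex_segment _ _).segment_subset (h.crossing_mem k hk) (left_mem_segment ℝ _ _) hq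
  have hq_ne : q ∉ ({w k, u k} : Set Pt) := by
    rintro (rfl | rfl)
    · exact hmwk.ne hq0
    · exact (hbelow _ hq).not_gt (h.gt_of_mem_right _ (h.right_mem k hk))
  rcases hside with hside | hside
  · exact hq_ne (hik' ⟨(convex_segment _ _).segment_subset (h.crossing_mem i hi) hpi hside, hqk⟩)
  · exact hq_ne (hkj' ⟨hqk, (convex_segment _ _).segment_subset (h.crossing_mem j hj) hpj hside⟩)

theorem segment_inter_subset_of_adjacent (h : CrossingEdges A B f g c n w u x)
    (hadj : ∀ k, k + 1 < n → ({w k, u k} ∩ {w (k + 1), u (k + 1)} : Set Pt).Nonempty)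
    (hij : i < j) (hj : j < n) :
    segment ℝ (w i) (u i) ∩ segment ℝ (w j) (u j) ⊆ {w i, u i} ∩ {w j, u j} := by
  have hnext : ∀ k, k + 1 < n → segment ℝ (w k) (u k) ∩ segment ℝ (w (k + 1)) (u (k + 1)) ⊆
      {w k, u k} ∩ {w (k + 1), u (k + 1)} := fun k hk => by
    obtain ⟨q, hq⟩ := hadj k hk
    exact (h.segment_inter_subset_of_mem_pair k.lt_succ_self hk hq.1 hq.2).trans
      (singleton_subset_iff.2 hq)
  obtain ⟨d, rfl⟩ := Nat.exists_eq_add_of_lt hij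
  induction d generalizing i with
  | zero => exact hnext i hj
  | succ d ih =>
    have hi : i < n := by omega
    have hkj := ih (i := i + 1) (by omega) (by omega)
    rw [show i + 1 + d + 1 = i + (d + 1) + 1 by ring] at hkj
    set j := i + (d + 1) + 1
    rintro p ⟨hpi, hpj⟩
    by_cases hpi' : p ∈ ({w i, u i} : Set Pt)
    · exact ⟨hpi', h.mem_pair_of_mem_pair hi hj hpi' hpj⟩
    by_cases hpj' : p ∈ ({w j, u j} : Set Pt)
    · exact ⟨h.mem_pair_of_mem_pair hj hi hpj' hpi, hpj'⟩
    exfalso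
    have hik := (hnext i (by omega)).trans inter_subset_right
    replace hkj := hkj.trans inter_subset_left
    rcases lt_trichotomy (f p) c with hfp | hfp | hfp
    · exact h.false_of_mem_inter_of_apply_lt i.lt_succ_self (by omega) hj hik hkj hpi hpj hfp
        (fun he => hpi' (Or.inl he)) (fun he => hpj' (Or.inl he))
    · exact (h.crossing_lt i j hij hj).ne
        (by rw [← h.eq_crossing hi hpi hfp, ← h.eq_crossing hj hpj hfp])
    · simp only [segment_symm ℝ (w _), pair_comm (w _)] at hik hkj hpi hpj
      exact h.symm.false_of_mem_inter_of_apply_lt i.lt_succ_self (by omega) hj hik hkj hpi hpj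
        (neg_lt_neg hfp) (fun he => hpi' (Or.inr he)) (fun he => hpj' (Or.inr he))

end CrossingEdges

theorem Switchable.exists_crossingEdges {S S₁ S₂ : Finset Pt} {v : List Pt}
    (hsw : Switchable S S₁ S₂ v) :
    ∃ (f g : Pt →ₗ[ℝ] ℝ) (c : ℝ) (w u x : ℕ → Pt),
      CrossingEdges (convexHull ℝ (S₁ : Set Pt)) (convexHull ℝ (S₂ : Set Pt)) f g c
        (v.length - 1) w u x ∧
      ∀ k, k + 1 < v.length → ({w k, u k} : Set Pt) = {v[k]!, v[k + 1]!} := by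
  obtain ⟨-, hvis, ⟨f, c, hf₁, hf₂, x, hx, g, hg⟩, -⟩ := hsw
  have horient : ∀ k, ∃ e : Pt × Pt, k + 1 < v.length →
      VisEdge S₁ S₂ e.1 e.2 ∧ ({e.1, e.2} : Set Pt) = {v[k]!, v[k + 1]!} := by
    intro k
    by_cases hk : k + 1 < v.length
    · rcases hvis k hk with he | he
      exacts [⟨(v[k]!, v[k + 1]!), fun _ => ⟨he, rfl⟩⟩,
        ⟨(v[k + 1]!, v[k]!), fun _ => ⟨he, pair_comm _ _⟩⟩]
    · exact ⟨(0, 0), fun hk' => absurd hk' hk⟩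
  choose e he using horient
  refine ⟨f, g, c, fun k => (e k).1, fun k => (e k).2, x, ⟨convex_convexHull ℝ _,
    convex_convexHull ℝ _, fun z hz => convexHull_min hf₁ (convex_halfSpace_lt f.isLinear c) hz,
    fun z hz => convexHull_min hf₂ (convex_halfSpace_gt f.isLinear c) hz,
    fun k hk => subset_convexHull ℝ _ (he k (by omega)).1.1,
    fun k hk => subset_convexHull ℝ _ (he k (by omega)).1.2.1,
    fun k hk => (he k (by omega)).1.2.2.subset,
    fun k hk => segment_eq_of_pair_eq (he k (by omega)).2 ▸ (hx k (by omega)).1,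
    fun k hk => (hx k (by omega)).2, fun i j hij hj => hg i j hij (by omega)⟩,
    fun k hk => (he k hk).2⟩

theorem stmt_19_general (S S₁ S₂ : Finset Pt) (v : List Pt) (hsw : Switchable S S₁ S₂ v) :
    PlaneList v := by
  obtain ⟨f, g, c, w, u, x, hE, hwu⟩ := hsw.exists_crossingEdges
  intro i j hij hj
  have hi : i + 1 < v.length := by omega
  rw [← segment_eq_of_pair_eq (hwu i hi), ← segment_eq_of_pair_eq (hwu j hj), ← hwu i hi,
    ← hwu j hj]
  refine hE.segment_inter_subset_of_adjacent (fun k hk => ⟨v[k + 1]!, ?_, ?_⟩) hij (by omega)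
  · rw [hwu k (by omega)]
    exact mem_insert_of_mem _ rfl
  · rw [hwu (k + 1) (by omega)]
    exact mem_insert _ _

theorem stmt_19 (S S₁ S₂ : Finset Pt) (hgp : GenPos (S : Set Pt))
    (hbsp : BSP S S₁ S₂) (v : List Pt) (hsw : Switchable S S₁ S₂ v) :
    PlaneList v :=
  stmt_19_general S S₁ S₂ v hsw
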